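/- Suppose ∑_n min(p_n, q_n) = ∞ (mixing) and the walk satisfies the spreading property: for all n, K, lim_{m→∞} P(|S_m| ≤ K | F_n) = 0 a.s. Then P(S_n = 0 infinitely often | Y_1) = 1, i.e. the coin-turning walk is recurrent. -/

import Mathlib

/-!
For `n ≤ r ≤ m` the walk splits as `S m = S r + Y r * V`, where `V` depends only on
`X (r+1), …, X m`. If `|V| > r ≥ |S r|`, then `sign (S m) = Y n * (X (n+1) ⋯ X r) * sign V`;
otherwise `|S m| ≤ 2r`. The middle factor is independent of `F n` and of `V` and has mean
`∏ (1 - 2 p i)`, which mixing makes small as `r → ∞`, while spreading makes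
`P(|S m| ≤ 2r | F n)` small as `m → ∞`. Hence `E[sign (S m) | F n] → 0`, so the event that `S`
stays positive (or negative) after time `t` has conditional probability at most `1/2` given every
`F n`, and Lévy's zero-one law makes it null. A walk with steps `±1` on the integers that
eventually avoids `0` stays on one side of it.
-/

open MeasureTheory ProbabilityTheory Filter Finset Topology

lemma Real.sign_add_of_abs_lt {a w : ℝ} (h : |a| < |w|) : Real.sign (a + w) = Real.sign w := by
  rcases lt_trichotomy w 0 with hw | rfl | hw
  · rw [abs_of_neg hw] at h
    rw [Real.sign_of_neg hw, Real.sign_of_neg (by linarith [le_abs_self a])]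
  · exact absurd h (by simp)
  · rw [abs_of_pos hw] at h
    rw [Real.sign_of_pos hw, Real.sign_of_pos (by linarith [neg_abs_le a])]

lemma Real.sign_add_mul_of_abs_lt {a y w : ℝ} (hy : |y| = 1) (h : |a| < |w|) :
    Real.sign (a + y * w) = y * Real.sign w := by
  rcases (abs_eq zero_le_one).mp hy with rfl | rfl
  · simp [Real.sign_add_of_abs_lt h]
  · rw [← abs_neg a] at h
    rw [show a + -1 * w = -(-a + w) by ring, Real.sign_neg, Real.sign_add_of_abs_lt h, neg_one_mul]

lemma Real.abs_sign_le_one (x : ℝ) : |Real.sign x| ≤ 1 := by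
  rcases Real.sign_apply_eq x with h | h | h <;> simp [h]

lemma Real.measurable_sign : Measurable Real.sign :=
  Measurable.ite measurableSet_Iio measurable_const <|
    Measurable.ite measurableSet_Ioi measurable_const measurable_const

lemma forall_pos_of_forall_ne_zero {s : ℕ → ℝ} (hint : ∀ m, ∃ z : ℤ, s m = z)
    (hstep : ∀ m, |s (m + 1) - s m| ≤ 1) {t : ℕ} (ht : 0 < s t) (hne : ∀ m ≥ t, s m ≠ 0) :
    ∀ m ≥ t, 0 < s m := by
  intro m hm
  induction m, hm using Nat.le_induction with
  | base => exact ht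
  | succ m hm ih =>
    obtain ⟨z, hz⟩ := hint m
    have hone : 1 ≤ s m := by
      rw [hz] at ih ⊢
      exact_mod_cast (show (0 : ℤ) < z by exact_mod_cast ih)
    have := (abs_le.mp (hstep m)).1
    exact lt_of_le_of_ne (by linarith) (hne (m + 1) (by omega)).symm

lemma eventually_pos_or_neg_of_not_frequently_zero {s : ℕ → ℝ} (hint : ∀ m, ∃ z : ℤ, s m = z)
    (hstep : ∀ m, |s (m + 1) - s m| ≤ 1) (h : ¬∃ᶠ m in atTop, s m = 0) :
    ∃ t, (∀ m ≥ t, 0 < s m) ∨ ∀ m ≥ t, s m < 0 := by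
  obtain ⟨t, hne⟩ := eventually_atTop.mp (not_frequently.mp h)
  refine ⟨t, (Ne.lt_or_gt (hne t le_rfl)).symm.imp (forall_pos_of_forall_ne_zero hint hstep · hne)
    fun hneg m hm => neg_pos.mp ?_⟩
  refine forall_pos_of_forall_ne_zero (s := -s) (fun m => ?_) (fun m => ?_) (neg_pos.mpr hneg)
    (fun m hm => neg_ne_zero.mpr (hne m hm)) m hm
  · obtain ⟨z, hz⟩ := hint m
    exact ⟨-z, by simp [hz]⟩
  · simpa only [Pi.neg_apply, neg_sub_neg, abs_sub_comm] using hstep m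

lemma tendsto_zero_of_abs_le_add {a d : ℕ → ℝ} {b : ℕ → ℕ → ℝ} (hd : Tendsto d atTop (𝓝 0))
    (hb : ∀ j, Tendsto (b j) atTop (𝓝 0))
    (hab : ∀ᶠ j in atTop, ∀ᶠ m in atTop, |a m| ≤ d j + b j m) : Tendsto a atTop (𝓝 0) := by
  rw [Metric.tendsto_nhds] at hd ⊢
  intro ε hε
  obtain ⟨j, hj, habj⟩ := ((hd (ε / 2) (half_pos hε)).and hab).exists
  filter_upwards [Metric.tendsto_nhds.mp (hb j) (ε / 2) (half_pos hε), habj] with m hbm ham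
  rw [Real.dist_eq, sub_zero] at hj hbm ⊢
  linarith [le_abs_self (d j), le_abs_self (b j m)]

lemma tendsto_sum_Ioc_atTop_of_not_summable {f : ℕ → ℝ} (hf : ∀ i, 0 ≤ f i) (h : ¬Summable f)
    (n : ℕ) : Tendsto (fun r => ∑ i ∈ Ioc n r, f i) atTop atTop := by
  have hrange := ((not_summable_iff_tendsto_nat_atTop_of_nonneg hf).mp h).comp
    (tendsto_add_atTop_nat 1)
  refine (tendsto_atTop_add_const_right _ (-∑ i ∈ range (n + 1), f i) hrange).congr' ?_
  filter_upwards [eventually_ge_atTop n] with r hr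
  rw [← Ico_add_one_add_one_eq_Ioc, sum_Ico_eq_sub _ (by omega), Function.comp_apply,
    sub_eq_add_neg]

lemma tendsto_prod_Ioc_abs_one_sub_two_mul {p : ℕ → ℝ} (hp : ∀ n, p n ∈ Set.Icc (0 : ℝ) 1)
    (hmix : ¬Summable fun n => min (p n) (1 - p n)) (n : ℕ) :
    Tendsto (fun r => ∏ i ∈ Ioc n r, |1 - 2 * p i|) atTop (𝓝 0) := by
  have hmin : ∀ i, |1 - 2 * p i| = 1 - 2 * min (p i) (1 - p i) := fun i => by
    rcases le_total (p i) (1 - p i) with h | h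
    · rw [min_eq_left h, abs_of_nonneg (by linarith)]
    · rw [min_eq_right h, abs_of_nonpos (by linarith [(hp i).2])]; ring
  have hbound : ∀ r, ∏ i ∈ Ioc n r, |1 - 2 * p i| ≤
      Real.exp (-(2 * ∑ i ∈ Ioc n r, min (p i) (1 - p i))) := fun r => by
    rw [mul_sum, ← sum_neg_distrib, Real.exp_sum]
    exact prod_le_prod (fun i _ => abs_nonneg _) fun i _ => hmin i ▸ Real.one_sub_le_exp_neg _
  have hsum := tendsto_sum_Ioc_atTop_of_not_summable
    (fun i => le_min (hp i).1 (by linarith [(hp i).2])) hmix n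
  exact squeeze_zero (fun r => prod_nonneg fun i _ => abs_nonneg _) hbound
    (Real.tendsto_exp_atBot.comp (tendsto_neg_atTop_atBot.comp (hsum.const_mul_atTop two_pos)))

lemma ProbabilityTheory.iIndepFun.integral_finset_prod {Ω ι : Type*} {mΩ : MeasurableSpace Ω}
    {P : Measure Ω} {X : ι → Ω → ℝ} (hind : iIndepFun X P) (hXm : ∀ i, AEStronglyMeasurable (X i) P)
    (s : Finset ι) : ∫ ω, ∏ i ∈ s, X i ω ∂P = ∏ i ∈ s, ∫ ω, X i ω ∂P := by
  simp only [← Finset.prod_coe_sort s]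
  exact (hind.precomp Subtype.val_injective).integral_fun_prod_eq_prod_integral fun i => hXm i

lemma abs_condExp_le_abs_condExp_add {Ω : Type*} {m mΩ : MeasurableSpace Ω} {μ : Measure Ω}
    {f g e : Ω → ℝ} (hf : Integrable f μ) (hg : Integrable g μ) (he : Integrable e μ)
    (hfg : ∀ ω, |f ω - g ω| ≤ e ω) : ∀ᵐ ω ∂μ, |μ[f | m] ω| ≤ |μ[g | m] ω| + μ[e | m] ω := by
  filter_upwards [condExp_sub hf hg m, abs_condExp_ae_le_condExp_abs (μ := μ) (m := m) (f - g),
    condExp_mono (m := m) (hf.sub hg).abs he (ae_of_all _ hfg)] with ω hsub habs hmono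
  rw [Pi.sub_apply] at hsub
  calc |μ[f | m] ω| = |μ[f - g | m] ω + μ[g | m] ω| := by rw [hsub, sub_add_cancel]
    _ ≤ |μ[f - g | m] ω| + |μ[g | m] ω| := abs_add_le _ _
    _ ≤ |μ[g | m] ω| + μ[e | m] ω := by
      have : |μ[f - g | m] ω| ≤ μ[e | m] ω := habs.trans hmono
      linarith

section Levy

variable {Ω : Type*} {mΩ : MeasurableSpace Ω} {P : Measure Ω} [IsFiniteMeasure P]
  {ℱ : Filtration ℕ mΩ}

lemma measure_eq_zero_of_condExp_indicator_le {D : Set Ω} (hD : MeasurableSet[⨆ n, ℱ n] D)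
    {c : ℝ} (hc : c < 1) (h : ∀ n, ∀ᵐ ω ∂P, P[D.indicator 1 | ℱ n] ω ≤ c) : P D = 0 := by
  have hDm : MeasurableSet D := iSup_le ℱ.le D hD
  have hlevy := (integrable_const (μ := P) (1 : ℝ)).indicator hDm |>.tendsto_ae_condExp
    (stronglyMeasurable_const.indicator hD)
  refine measure_eq_zero_iff_ae_notMem.mpr ?_
  filter_upwards [hlevy, ae_all_iff.mpr h] with ω hω hle hmem
  have := le_of_tendsto hω (Eventually.of_forall hle)
  rw [Set.indicator_of_mem hmem] at this
  linarith

lemma condExp_indicator_le_of_forall_pos {D : Set Ω} (hD : MeasurableSet D) {f : Ω → ℝ}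
    (hf : Measurable f) (hpos : ∀ ω ∈ D, 0 < f ω) (n : ℕ) :
    ∀ᵐ ω ∂P, P[D.indicator 1 | ℱ n] ω ≤ 2⁻¹ * (1 + P[fun ω => Real.sign (f ω) | ℱ n] ω) := by
  have hsign : Integrable (fun ω => Real.sign (f ω)) P :=
    .of_bound (Real.measurable_sign.comp hf).aestronglyMeasurable 1
      (ae_of_all _ fun ω => Real.abs_sign_le_one _)
  have hle : D.indicator 1 ≤ (2⁻¹ : ℝ) • ((fun _ => 1) + fun ω => Real.sign (f ω)) := fun ω => by
    by_cases hω : ω ∈ D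
    · norm_num [Set.indicator_of_mem hω, Real.sign_of_pos (hpos ω hω)]
    · simp only [Set.indicator_of_notMem hω, Pi.smul_apply, Pi.add_apply, smul_eq_mul]
      linarith [neg_abs_le (Real.sign (f ω)), Real.abs_sign_le_one (f ω)]
  filter_upwards [condExp_mono (m := ℱ n) ((integrable_const 1).indicator hD)
      (((integrable_const 1).add hsign).smul _) (ae_of_all _ hle),
    condExp_smul (μ := P) (2⁻¹ : ℝ) ((fun _ => 1) + fun ω => Real.sign (f ω)) (ℱ n),
    condExp_add (integrable_const (1 : ℝ)) hsign (ℱ n)] with ω hmono hsmul hadd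
  rwa [hsmul, Pi.smul_apply, hadd, Pi.add_apply, condExp_const (ℱ.le n)] at hmono

lemma measure_forall_pos_eq_zero {Z : ℕ → Ω → ℝ} (hZ : ∀ m, Measurable[ℱ m] (Z m))
    (hbal : ∀ n, ∀ᵐ ω ∂P,
      Tendsto (fun m => P[fun ω => Real.sign (Z m ω) | ℱ n] ω) atTop (𝓝 0)) (t : ℕ) :
    P {ω | ∀ m ≥ t, 0 < Z m ω} = 0 := by
  set D := {ω | ∀ m ≥ t, 0 < Z m ω}
  have hD : MeasurableSet[⨆ n, ℱ n] D := by
    simp only [D, Set.ofPred_forall]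
    exact .iInter fun m => .iInter fun _ =>
      le_iSup (fun n => ℱ n) m _ (measurableSet_lt measurable_const (hZ m))
  refine measure_eq_zero_of_condExp_indicator_le hD (c := 2⁻¹) (by norm_num) fun n => ?_
  filter_upwards [hbal n, ae_all_iff.mpr fun k => condExp_indicator_le_of_forall_pos
    (iSup_le ℱ.le D hD) ((hZ (k + t)).mono (ℱ.le _) le_rfl) (fun ω hω => hω (k + t) (by omega)) n]
    with ω hω hcmp
  have hlim := (((tendsto_add_atTop_iff_nat t).mpr hω).const_add 1).const_mul 2⁻¹
  rw [add_zero, mul_one] at hlim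
  exact ge_of_tendsto hlim (Eventually.of_forall hcmp)

lemma measure_forall_neg_eq_zero {Z : ℕ → Ω → ℝ} (hZ : ∀ m, Measurable[ℱ m] (Z m))
    (hbal : ∀ n, ∀ᵐ ω ∂P,
      Tendsto (fun m => P[fun ω => Real.sign (Z m ω) | ℱ n] ω) atTop (𝓝 0)) (t : ℕ) :
    P {ω | ∀ m ≥ t, Z m ω < 0} = 0 := by
  have hbal_neg : ∀ n, ∀ᵐ ω ∂P,
      Tendsto (fun m => P[fun ω => Real.sign ((-Z) m ω) | ℱ n] ω) atTop (𝓝 0) := fun n => by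
    filter_upwards [hbal n, ae_all_iff.mpr fun m =>
      condExp_neg (μ := P) (fun ω => Real.sign (Z m ω)) (ℱ n)] with ω hω hneg
    have hfun : ∀ m, (fun ω => Real.sign ((-Z) m ω)) = -fun ω => Real.sign (Z m ω) :=
      fun m => funext fun _ => Real.sign_neg
    rw [← neg_zero]
    refine hω.neg.congr fun m => ?_
    rw [hfun, hneg m, Pi.neg_apply]
  simpa using measure_forall_pos_eq_zero (fun m => (hZ m).neg) hbal_neg t

end Levy

section CoinTurning

variable {Ω : Type*}

noncomputable def coinTurn (X : ℕ → Ω → ℝ) (n : ℕ) (ω : Ω) : ℝ := ∏ k ∈ Icc 1 n, X k ω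

noncomputable def coinTurnWalk (X : ℕ → Ω → ℝ) (n : ℕ) (ω : Ω) : ℝ :=
  ∑ k ∈ Icc 1 n, coinTurn X k ω

noncomputable def coinTurnWalkFrom (X : ℕ → Ω → ℝ) (r m : ℕ) (ω : Ω) : ℝ :=
  ∑ k ∈ Ioc r m, ∏ i ∈ Ioc r k, X i ω

section Pathwise

variable {X : ℕ → Ω → ℝ} (ω : Ω)

lemma abs_coinTurn (hX : ∀ k ω, |X k ω| = 1) (n : ℕ) : |coinTurn X n ω| = 1 := by
  simp [coinTurn, abs_prod, hX]

lemma coinTurn_eq_mul_prod {a b : ℕ} (h : a ≤ b) :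
    coinTurn X b ω = coinTurn X a ω * ∏ i ∈ Ioc a b, X i ω :=
  (prod_Ioc_consecutive _ (Nat.zero_le a) h).symm

lemma coinTurnWalk_succ (m : ℕ) :
    coinTurnWalk X (m + 1) ω = coinTurnWalk X m ω + coinTurn X (m + 1) ω :=
  sum_Icc_succ_top (by omega) _

lemma coinTurnWalk_eq_add_mul {r m : ℕ} (h : r ≤ m) :
    coinTurnWalk X m ω = coinTurnWalk X r ω + coinTurn X r ω * coinTurnWalkFrom X r m ω := by
  rw [coinTurnWalkFrom, mul_sum]
  refine (sum_Ioc_consecutive _ (Nat.zero_le r) h).symm.trans (congrArg _ ?_)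
  exact sum_congr rfl fun k hk => coinTurn_eq_mul_prod ω (mem_Ioc.mp hk).1.le

lemma abs_coinTurnWalk_le (hX : ∀ k ω, |X k ω| = 1) (r : ℕ) : |coinTurnWalk X r ω| ≤ r :=
  (abs_sum_le_sum_abs _ _).trans (by simp [abs_coinTurn ω hX])

lemma abs_coinTurnWalk_succ_sub_le (hX : ∀ k ω, |X k ω| = 1) (m : ℕ) :
    |coinTurnWalk X (m + 1) ω - coinTurnWalk X m ω| ≤ 1 := by
  rw [coinTurnWalk_succ, add_sub_cancel_left, abs_coinTurn ω hX]

lemma exists_coinTurnWalk_eq_intCast (hX : ∀ k ω, |X k ω| = 1) (m : ℕ) :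
    ∃ z : ℤ, coinTurnWalk X m ω = z := by
  induction m with
  | zero => exact ⟨0, by simp [coinTurnWalk]⟩
  | succ m ih =>
    obtain ⟨z, hz⟩ := ih
    rw [coinTurnWalk_succ, hz]
    rcases (abs_eq zero_le_one).mp (abs_coinTurn ω hX (m + 1)) with h | h
    · exact ⟨z + 1, by rw [h]; push_cast; ring⟩
    · exact ⟨z - 1, by rw [h]; push_cast; ring⟩

/-- Once the restarted walk `coinTurnWalkFrom X r m` has left `[-r, r]` it fixes the sign of the
walk at time `m`; otherwise the walk is within `2r` of the origin. -/
lemma abs_sign_coinTurnWalk_sub_le (hX : ∀ k ω, |X k ω| = 1) {n r m : ℕ} (hnr : n ≤ r)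
    (hrm : r ≤ m) :
    |Real.sign (coinTurnWalk X m ω) - coinTurn X n ω *
        ((∏ i ∈ Ioc n r, X i ω) * Real.sign (coinTurnWalkFrom X r m ω))| ≤
      2 * {ω | |coinTurnWalk X m ω| ≤ ((2 * r : ℕ) : ℝ)}.indicator (fun _ => (1 : ℝ)) ω := by
  have hdecomp := coinTurnWalk_eq_add_mul (X := X) ω hrm
  rw [← mul_assoc, ← coinTurn_eq_mul_prod ω hnr]
  by_cases hfar : (r : ℝ) < |coinTurnWalkFrom X r m ω|
  · rw [hdecomp, Real.sign_add_mul_of_abs_lt (abs_coinTurn ω hX r)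
      ((abs_coinTurnWalk_le ω hX r).trans_lt hfar), sub_self, abs_zero]
    exact mul_nonneg zero_le_two (Set.indicator_nonneg (fun _ _ => zero_le_one) _)
  · have hnear : |coinTurnWalk X m ω| ≤ ((2 * r : ℕ) : ℝ) := by
      calc _ ≤ |coinTurnWalk X r ω| + |coinTurnWalkFrom X r m ω| := by
            rw [hdecomp, ← one_mul |coinTurnWalkFrom X r m ω|, ← abs_coinTurn ω hX r, ← abs_mul]
            exact abs_add_le _ _
        _ ≤ ((2 * r : ℕ) : ℝ) := by
            push_cast
            linarith [abs_coinTurnWalk_le ω hX r, not_lt.mp hfar]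
    rw [Set.indicator_of_mem (show ω ∈ {ω | |coinTurnWalk X m ω| ≤ ((2 * r : ℕ) : ℝ)} from hnear),
      mul_one]
    refine (abs_sub _ _).trans ?_
    rw [abs_mul, abs_coinTurn ω hX r, one_mul]
    linarith [Real.abs_sign_le_one (coinTurnWalk X m ω),
      Real.abs_sign_le_one (coinTurnWalkFrom X r m ω)]

end Pathwise

section Independence

variable {mΩ : MeasurableSpace Ω} {P : Measure Ω} {X : ℕ → Ω → ℝ}

abbrev blockSigma (X : ℕ → Ω → ℝ) (I : Set ℕ) : MeasurableSpace Ω :=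
  ⨆ i ∈ I, MeasurableSpace.comap (X i) inferInstance

lemma measurable_blockSigma {I : Set ℕ} {i : ℕ} (hi : i ∈ I) :
    Measurable[blockSigma X I] (X i) :=
  measurable_iff_comap_le.mpr
    (le_iSup₂ (f := fun i (_ : i ∈ I) => MeasurableSpace.comap (X i) inferInstance) i hi)

lemma measurable_blockSigma_prod {I : Set ℕ} {s : Finset ℕ} (hs : ↑s ⊆ I) :
    Measurable[blockSigma X I] fun ω => ∏ i ∈ s, X i ω :=
  Finset.measurable_prod _ fun _ hi => measurable_blockSigma (hs hi)

lemma blockSigma_mono {I J : Set ℕ} (h : I ⊆ J) : blockSigma X I ≤ blockSigma X J :=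
  biSup_mono h

lemma blockSigma_le (hXm : ∀ i, Measurable (X i)) (I : Set ℕ) : blockSigma X I ≤ mΩ :=
  iSup₂_le fun i _ => (hXm i).comap_le

lemma indep_blockSigma (hXm : ∀ i, Measurable (X i)) (hind : iIndepFun X P) {I J : Set ℕ}
    (h : Disjoint I J) : Indep (blockSigma X I) (blockSigma X J) P :=
  indep_iSup_of_disjoint (fun i => (hXm i).comap_le) hind.iIndep h

lemma measurable_coinTurn (hXm : ∀ k, Measurable (X k)) (n : ℕ) : Measurable (coinTurn X n) :=
  Finset.measurable_prod _ fun k _ => hXm k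

noncomputable def coinTurnFiltration (hXm : ∀ k, Measurable (X k)) : Filtration ℕ mΩ :=
  Filtration.natural (coinTurn X) fun n => (measurable_coinTurn hXm n).stronglyMeasurable

lemma coinTurnFiltration_le_blockSigma (hXm : ∀ k, Measurable (X k)) (n : ℕ) :
    coinTurnFiltration hXm n ≤ blockSigma X (Set.Iic n) :=
  iSup₂_le fun _ hj => measurable_iff_comap_le.mp <| measurable_blockSigma_prod fun _ hi =>
    Set.mem_Iic.mpr ((mem_Icc.mp hi).2.trans hj)

lemma measurable_coinTurn_filtration (hXm : ∀ k, Measurable (X k)) {k n : ℕ} (h : k ≤ n) :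
    Measurable[coinTurnFiltration hXm n] (coinTurn X k) :=
  ((Filtration.stronglyAdapted_natural _ k).mono ((coinTurnFiltration hXm).mono h)).measurable

lemma measurable_coinTurnWalk (hXm : ∀ k, Measurable (X k)) (n : ℕ) :
    Measurable (coinTurnWalk X n) :=
  Finset.measurable_sum _ fun k _ => measurable_coinTurn hXm k

lemma measurable_coinTurnWalk_filtration (hXm : ∀ k, Measurable (X k)) (n : ℕ) :
    Measurable[coinTurnFiltration hXm n] (coinTurnWalk X n) :=
  Finset.measurable_sum _ fun _ hk => measurable_coinTurn_filtration hXm (mem_Icc.mp hk).2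

lemma integrable_coinTurn_mul (hX : ∀ k ω, |X k ω| = 1) (hXm : ∀ k, Measurable (X k)) (n : ℕ)
    {W : Ω → ℝ} (hWint : Integrable W P) : Integrable (coinTurn X n * W) P :=
  hWint.mono ((measurable_coinTurn hXm n).aestronglyMeasurable.mul hWint.1)
    (ae_of_all _ fun ω => by simp [abs_coinTurn ω hX])

end Independence

section Walk

variable {mΩ : MeasurableSpace Ω} {P : Measure Ω} [IsProbabilityMeasure P] {X : ℕ → Ω → ℝ}

lemma measurable_sign_coinTurnWalkFrom (r m : ℕ) :
    Measurable[blockSigma X (Set.Ioi r)] fun ω => Real.sign (coinTurnWalkFrom X r m ω) :=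
  Real.measurable_sign.comp <| Finset.measurable_sum _ fun _ _ =>
    measurable_blockSigma_prod fun _ hi => (mem_Ioc.mp hi).1

lemma abs_integral_prod_mul_sign_le (hXm : ∀ k, Measurable (X k)) (hind : iIndepFun X P)
    (n r m : ℕ) :
    |∫ ω, (∏ i ∈ Ioc n r, X i ω) * Real.sign (coinTurnWalkFrom X r m ω) ∂P| ≤
      ∏ i ∈ Ioc n r, |∫ ω, X i ω ∂P| := by
  have hprod : Measurable[blockSigma X (Set.Ioc n r)] fun ω => ∏ i ∈ Ioc n r, X i ω :=
    measurable_blockSigma_prod (by rw [coe_Ioc])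
  have hsign := measurable_sign_coinTurnWalkFrom (X := X) r m
  have hindep : IndepFun (fun ω => ∏ i ∈ Ioc n r, X i ω)
      (fun ω => Real.sign (coinTurnWalkFrom X r m ω)) P :=
    (IndepFun_iff_Indep _ _ _).mpr <| indep_of_indep_of_le
      (indep_blockSigma hXm hind Set.Ioc_disjoint_Ioi_same) hprod.comap_le hsign.comap_le
  have hsign_le : |∫ ω, Real.sign (coinTurnWalkFrom X r m ω) ∂P| ≤ 1 := by
    simpa using norm_integral_le_of_norm_le_const (μ := P)
      (ae_of_all _ fun ω => (Real.norm_eq_abs _).trans_le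
        (Real.abs_sign_le_one (coinTurnWalkFrom X r m ω)))
  rw [hindep.integral_fun_mul_eq_mul_integral
      (hprod.mono (blockSigma_le hXm _) le_rfl).aestronglyMeasurable
      (hsign.mono (blockSigma_le hXm _) le_rfl).aestronglyMeasurable,
    abs_mul, hind.integral_finset_prod (fun i => (hXm i).aestronglyMeasurable), abs_prod]
  exact mul_le_of_le_one_right (prod_nonneg fun _ _ => abs_nonneg _) hsign_le

lemma condExp_coinTurn_mul (hX : ∀ k ω, |X k ω| = 1) (hXm : ∀ k, Measurable (X k))
    (hind : iIndepFun X P) {n : ℕ} {W : Ω → ℝ} (hW : Measurable[blockSigma X (Set.Ioi n)] W)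
    (hWint : Integrable W P) :
    P[coinTurn X n * W | coinTurnFiltration hXm n] =ᵐ[P] coinTurn X n * fun _ => ∫ ω, W ω ∂P := by
  refine (condExp_mul_of_stronglyMeasurable_left
    (measurable_coinTurn_filtration hXm le_rfl).stronglyMeasurable
    (integrable_coinTurn_mul hX hXm n hWint) hWint).trans
    (EventuallyEq.mul EventuallyEq.rfl ?_)
  exact condExp_indep_eq (blockSigma_le hXm _) ((coinTurnFiltration hXm).le n)
    (hW.stronglyMeasurable) <| indep_of_indep_of_le_right
      (indep_blockSigma hXm hind (Set.Iic_disjoint_Ioi le_rfl).symm)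
      (coinTurnFiltration_le_blockSigma hXm n)

lemma abs_condExp_sign_coinTurnWalk_le (hX : ∀ k ω, |X k ω| = 1) (hXm : ∀ k, Measurable (X k))
    (hind : iIndepFun X P) {n r m : ℕ} (hnr : n ≤ r) (hrm : r ≤ m) :
    ∀ᵐ ω ∂P, |P[fun ω => Real.sign (coinTurnWalk X m ω) | coinTurnFiltration hXm n] ω| ≤
      ∏ i ∈ Ioc n r, |∫ ω, X i ω ∂P| +
        2 * P[{ω | |coinTurnWalk X m ω| ≤ ((2 * r : ℕ) : ℝ)}.indicator (fun _ => (1 : ℝ)) |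
          coinTurnFiltration hXm n] ω := by
  set W := fun ω => (∏ i ∈ Ioc n r, X i ω) * Real.sign (coinTurnWalkFrom X r m ω)
  set near := {ω | |coinTurnWalk X m ω| ≤ ((2 * r : ℕ) : ℝ)}.indicator fun _ => (1 : ℝ)
  have hW : Measurable[blockSigma X (Set.Ioi n)] W :=
    (measurable_blockSigma_prod fun _ hi => (mem_Ioc.mp hi).1).mul
      ((measurable_sign_coinTurnWalkFrom r m).mono (blockSigma_mono (Set.Ioi_subset_Ioi hnr))
        le_rfl)
  have hWint : Integrable W P :=
    .of_bound (hW.mono (blockSigma_le hXm _) le_rfl).aestronglyMeasurable 1 <| ae_of_all _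
      fun ω => by
        rw [Real.norm_eq_abs, abs_mul, abs_prod]
        simpa [hX] using Real.abs_sign_le_one (coinTurnWalkFrom X r m ω)
  have hnear : Integrable near P :=
    (integrable_const 1).indicator
      (measurableSet_le (measurable_coinTurnWalk hXm m).abs measurable_const)
  have hsign : Integrable (fun ω => Real.sign (coinTurnWalk X m ω)) P :=
    .of_bound (Real.measurable_sign.comp (measurable_coinTurnWalk hXm m)).aestronglyMeasurable 1
      (ae_of_all _ fun ω => (Real.norm_eq_abs _).trans_le (Real.abs_sign_le_one _))
  filter_upwards [abs_condExp_le_abs_condExp_add hsign (integrable_coinTurn_mul hX hXm n hWint)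
      (hnear.smul (2 : ℝ)) fun ω => abs_sign_coinTurnWalk_sub_le ω hX hnr hrm,
    condExp_coinTurn_mul hX hXm hind hW hWint,
    condExp_smul (μ := P) (2 : ℝ) near (coinTurnFiltration hXm n)] with ω hle hYW hsmul
  rw [hYW, hsmul, Pi.mul_apply, abs_mul, abs_coinTurn ω hX, one_mul, Pi.smul_apply,
    smul_eq_mul] at hle
  linarith [abs_integral_prod_mul_sign_le hXm hind n r m]

lemma tendsto_condExp_sign_coinTurnWalk (hX : ∀ k ω, |X k ω| = 1) (hXm : ∀ k, Measurable (X k))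
    (hind : iIndepFun X P)
    (hmix : ∀ n, Tendsto (fun r => ∏ i ∈ Ioc n r, |∫ ω, X i ω ∂P|) atTop (𝓝 0))
    (hspread : ∀ n K : ℕ, ∀ᵐ ω ∂P, Tendsto (fun m =>
      P[{ω | |coinTurnWalk X m ω| ≤ (K : ℝ)}.indicator (fun _ => (1 : ℝ)) |
        coinTurnFiltration hXm n] ω) atTop (𝓝 0)) (n : ℕ) :
    ∀ᵐ ω ∂P, Tendsto
      (fun m => P[fun ω => Real.sign (coinTurnWalk X m ω) | coinTurnFiltration hXm n] ω)
      atTop (𝓝 0) := by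
  filter_upwards [ae_all_iff.mpr fun r => hspread n (2 * r),
    ae_all_iff.mpr fun q : {q : ℕ × ℕ // n ≤ q.1 ∧ q.1 ≤ q.2} =>
      abs_condExp_sign_coinTurnWalk_le hX hXm hind q.2.1 q.2.2] with ω hnear hbound
  refine tendsto_zero_of_abs_le_add (hmix n)
    (fun r => by simpa only [mul_zero] using (hnear r).const_mul 2) ?_
  filter_upwards [eventually_ge_atTop n] with r hnr
  filter_upwards [eventually_ge_atTop r] with m hrm using hbound ⟨(r, m), hnr, hrm⟩

end Walk

end CoinTurning

theorem walk_recurrent_of_mixing_and_spreading_general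
    {Ω : Type*} {mΩ : MeasurableSpace Ω} (P : Measure Ω) [IsProbabilityMeasure P]
    (p : ℕ → ℝ) (hp : ∀ n, p n ∈ Set.Icc (0 : ℝ) 1)
    (hmix : ¬ Summable (fun n => min (p n) (1 - p n)))
    (X : ℕ → Ω → ℝ)
    (hXmeas : ∀ k, Measurable (X k))
    (hXindep : iIndepFun X P)
    (hXval : ∀ k ω, X k ω = 1 ∨ X k ω = -1)
    (hXmean : ∀ k, ∫ ω, X k ω ∂P = 1 - 2 * p k)
    (Y : ℕ → Ω → ℝ)
    (hY : ∀ n ω, Y n ω = ∏ k ∈ Finset.Icc 1 n, X k ω)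
    (hYmeas : ∀ n, StronglyMeasurable (Y n))
    (S : ℕ → Ω → ℝ)
    (hS : ∀ n ω, S n ω = ∑ k ∈ Finset.Icc 1 n, Y k ω)
    (hspread : ∀ n K : ℕ, ∀ᵐ ω ∂P,
      Tendsto
        (fun m =>
          (P[Set.indicator {ω' | |S m ω'| ≤ (K : ℝ)} (fun _ => (1 : ℝ))
            | (MeasureTheory.Filtration.natural Y hYmeas) n]) ω)
        atTop (nhds 0)) :
    P {ω | ∃ᶠ n in atTop, S n ω = 0} = 1 := by
  have hX : ∀ k ω, |X k ω| = 1 := fun k ω => by rcases hXval k ω with h | h <;> simp [h]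
  obtain rfl : Y = coinTurn X := funext fun n => funext (hY n)
  obtain rfl : S = coinTurnWalk X := funext fun n => funext (hS n)
  -- `Filtration.natural (coinTurn X) hYmeas` is `coinTurnFiltration hXmeas` by proof irrelevance.
  have hbal := tendsto_condExp_sign_coinTurnWalk hX hXmeas hXindep
    (by simpa only [hXmean] using tendsto_prod_Ioc_abs_one_sub_two_mul hp hmix) hspread
  have hpos := measure_forall_pos_eq_zero (measurable_coinTurnWalk_filtration hXmeas) hbal
  have hneg := measure_forall_neg_eq_zero (measurable_coinTurnWalk_filtration hXmeas) hbal
  refine (measure_congr (ae_eq_univ.mpr ?_)).trans measure_univ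
  refine measure_mono_null (fun ω hω => Set.mem_iUnion.mpr ?_)
    (measure_iUnion_null fun t => measure_union_null (hpos t) (hneg t))
  exact eventually_pos_or_neg_of_not_frequently_zero (exists_coinTurnWalk_eq_intCast ω hX)
    (abs_coinTurnWalk_succ_sub_le ω hX) hω

/-- Suppose `∑_n min(p_n, q_n) = ∞` (mixing) and the coin-turning walk satisfies the
spreading property: for all `n, K`, `lim_{m→∞} P(|S_m| ≤ K | F_n) = 0` a.s., where
`F_n = σ(Y_1, …, Y_n)` is the natural filtration of `Y`. Then
`P(S_n = 0 infinitely often) = 1`, i.e. the coin-turning walk is recurrent. -/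
theorem walk_recurrent_of_mixing_and_spreading
    {Ω : Type*} {mΩ : MeasurableSpace Ω} (P : Measure Ω) [IsProbabilityMeasure P]
    (p : ℕ → ℝ) (hp : ∀ n, p n ∈ Set.Icc (0 : ℝ) 1) (hp1 : p 1 = 1 / 2)
    (hmix : ¬ Summable (fun n => min (p n) (1 - p n)))
    (X : ℕ → Ω → ℝ)
    (hXmeas : ∀ k, Measurable (X k))
    (hXindep : iIndepFun X P)
    (hXval : ∀ k ω, X k ω = 1 ∨ X k ω = -1)
    (hXmean : ∀ k, ∫ ω, X k ω ∂P = 1 - 2 * p k)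
    (Y : ℕ → Ω → ℝ)
    (hY : ∀ n ω, Y n ω = ∏ k ∈ Finset.Icc 1 n, X k ω)
    (hYmeas : ∀ n, StronglyMeasurable (Y n))
    (S : ℕ → Ω → ℝ)
    (hS : ∀ n ω, S n ω = ∑ k ∈ Finset.Icc 1 n, Y k ω)
    (hspread : ∀ n K : ℕ, ∀ᵐ ω ∂P,
      Tendsto
        (fun m =>
          (P[Set.indicator {ω' | |S m ω'| ≤ (K : ℝ)} (fun _ => (1 : ℝ))
            | (MeasureTheory.Filtration.natural Y hYmeas) n]) ω)
        atTop (nhds 0)) :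
    P {ω | ∃ᶠ n in atTop, S n ω = 0} = 1 :=
  walk_recurrent_of_mixing_and_spreading_general (mΩ := mΩ) P p hp hmix X hXmeas hXindep hXval
    hXmean Y hY hYmeas S hS hspread
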